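/- Let G = (V,E) be a graph admitting an optimal order O, and suppose δ_G restricted to positions a, a+1, ..., b forms a maximal strictly increasing run (a monotonic segment). Let M be the set of vertices of V occupying positions a through b in the order O, and let X be the set of vertices occupying positions 1 through a-1. Then M induces a clique in G, and every vertex u ∈ M has exactly δ_G(a) neighbors in X. -/
import Mathlib


open Finset

/-- Number of edges of `G` with both endpoints in `A`. -/
def edgesIn {V : Type*} (G : SimpleGraph V) [Fintype V] [DecidableEq V]
    [DecidableRel G.Adj] (A : Finset V) : ℕ :=
  (G.edgeFinset.filter (fun e => ∀ v ∈ e, v ∈ A)).card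

/-- `maxEdges G m` is the maximum number of induced edges over all `m`-element vertex sets. -/
def maxEdges {V : Type*} (G : SimpleGraph V) [Fintype V] [DecidableEq V]
    [DecidableRel G.Adj] (m : ℕ) : ℕ :=
  ((Finset.univ : Finset V).powersetCard m).sup (fun A => edgesIn G A)

/-- The `δ`-sequence of `G` (1-indexed, as an integer). -/
def deltaSeq {V : Type*} (G : SimpleGraph V) [Fintype V] [DecidableEq V]
    [DecidableRel G.Adj] (m : ℕ) : ℤ :=
  (maxEdges G m : ℤ) - (maxEdges G (m - 1) : ℤ)


section Aux
variable {V : Type*} [DecidableEq V]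

lemma edgesIn_insert (G : SimpleGraph V) [Fintype V] [DecidableRel G.Adj]
    (A : Finset V) (v : V) (hv : v ∉ A) :
    edgesIn G (insert v A) = edgesIn G A + (G.neighborFinset v ∩ A).card := by
  classical
  unfold edgesIn
  rw [← Finset.card_filter_add_card_filter_not (p := fun e => v ∈ e)
    (s := G.edgeFinset.filter (fun e => ∀ x ∈ e, x ∈ insert v A)), add_comm]
  congr 1
  · rw [Finset.filter_filter]
    congr 1
    ext e
    induction e with
    | _ x y =>
      simp only [Finset.mem_filter, SimpleGraph.mem_edgeFinset, Sym2.mem_iff,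
        Finset.mem_insert, SimpleGraph.mem_edgeSet]
      constructor
      · rintro ⟨hadj, hmem, hne⟩
        refine ⟨hadj, ?_⟩
        rintro z (rfl | rfl)
        · rcases hmem z (Or.inl rfl) with h | h
          · exact absurd (Or.inl h.symm) hne
          · exact h
        · rcases hmem z (Or.inr rfl) with h | h
          · exact absurd (Or.inr h.symm) hne
          · exact h
      · rintro ⟨hadj, hmem⟩
        refine ⟨hadj, fun z hz => Or.inr (hmem z hz), ?_⟩
        rintro (rfl | rfl)
        · exact hv (hmem v (Or.inl rfl))
        · exact hv (hmem v (Or.inr rfl))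
  · rw [Finset.filter_filter]
    rw [show (G.edgeFinset.filter (fun e => (∀ x ∈ e, x ∈ insert v A) ∧ v ∈ e))
      = (G.neighborFinset v ∩ A).image (fun w => s(v, w)) from ?_]
    · rw [Finset.card_image_of_injOn]
      intro w _ w' _ h
      exact (Sym2.congr_right).mp h
    · ext e
      induction e with
      | _ x y =>
        simp only [Finset.mem_filter, SimpleGraph.mem_edgeFinset, Sym2.mem_iff,
          Finset.mem_insert, SimpleGraph.mem_edgeSet, Finset.mem_image, Finset.mem_inter,
          SimpleGraph.mem_neighborFinset]
        constructor
        · rintro ⟨hadj, hmem, (rfl | rfl)⟩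
          · refine ⟨y, ⟨hadj, ?_⟩, rfl⟩
            rcases hmem y (Or.inr rfl) with h | h
            · exact absurd h hadj.ne'
            · exact h
          · refine ⟨x, ⟨hadj.symm, ?_⟩, Sym2.eq_swap⟩
            rcases hmem x (Or.inl rfl) with h | h
            · exact absurd h hadj.ne
            · exact h
        · rintro ⟨w, ⟨hadj, hw⟩, heq⟩
          rcases Sym2.eq_iff.mp heq.symm with ⟨rfl, rfl⟩ | ⟨rfl, rfl⟩
          · exact ⟨hadj, by rintro z (rfl | rfl) <;> simp [hw], Or.inl rfl⟩
          · exact ⟨hadj.symm, by rintro z (rfl | rfl) <;> simp [hw], Or.inr rfl⟩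

lemma edgesIn_le_maxEdges (G : SimpleGraph V) [Fintype V] [DecidableRel G.Adj]
    (A : Finset V) : edgesIn G A ≤ maxEdges G A.card :=
  Finset.le_sup (Finset.mem_powersetCard.mpr ⟨Finset.subset_univ A, rfl⟩)

/-- The first `m` vertices of the order. -/
def pref {n : ℕ} (ord : Fin n ≃ V) (m : ℕ) : Finset V :=
  (Finset.univ.filter (fun j : Fin n => (j : ℕ) < m)).image ord

lemma mem_pref {n : ℕ} (ord : Fin n ≃ V) (m : ℕ) (i : Fin n) :
    ord i ∈ pref ord m ↔ (i : ℕ) < m := by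
  simp [pref, ord.injective.eq_iff]

lemma card_pref {n : ℕ} (ord : Fin n ≃ V) (m : ℕ) (hm : m ≤ n) :
    (pref ord m).card = m := by
  rw [pref, Finset.card_image_of_injective _ ord.injective]
  rw [show (Finset.univ.filter (fun j : Fin n => (j : ℕ) < m))
      = (Finset.range m).attachFin (fun k hk => lt_of_lt_of_le (Finset.mem_range.mp hk) hm)
    from by ext j; simp [Finset.mem_attachFin]]
  rw [Finset.card_attachFin, Finset.card_range]

lemma pref_succ {n : ℕ} (ord : Fin n ≃ V) (m : ℕ) (hm : m < n) :
    pref ord (m + 1) = insert (ord ⟨m, hm⟩) (pref ord m) := by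
  rw [pref, pref, show (Finset.univ.filter (fun j : Fin n => (j : ℕ) < m + 1))
      = insert (⟨m, hm⟩ : Fin n) (Finset.univ.filter (fun j : Fin n => (j : ℕ) < m))
    from by ext j; simp [Fin.ext_iff]; omega, Finset.image_insert]

lemma pref_mono {n : ℕ} (ord : Fin n ≃ V) {m m' : ℕ} (h : m ≤ m') :
    pref ord m ⊆ pref ord m' := by
  apply Finset.image_subset_image
  intro j hj
  simp only [Finset.mem_filter] at hj ⊢
  exact ⟨hj.1, lt_of_lt_of_le hj.2 h⟩

end Aux
/-- a monotonic segment of the `δ`-sequence of a graph with an optimal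
order corresponds to a clique `M`, each of whose vertices has exactly `δ_G(a)`
neighbors among the earlier vertices `X`. -/
theorem monotonic_segment_clique {V : Type*} (G : SimpleGraph V) [Fintype V] [DecidableEq V]
    [DecidableRel G.Adj] (ord : Fin (Fintype.card V) ≃ V)
    (hopt : ∀ m : ℕ, m ≤ Fintype.card V →
      edgesIn G ((Finset.univ.filter (fun j : Fin (Fintype.card V) => (j : ℕ) < m)).image ord)
        = maxEdges G m)
    (a b : ℕ) (ha : 1 ≤ a) (hab : a ≤ b) (hb : b ≤ Fintype.card V)
    (hmono : ∀ j : ℕ, a ≤ j → j < b → deltaSeq G j < deltaSeq G (j + 1))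
    (hmaxl : a = 1 ∨ ¬ deltaSeq G (a - 1) < deltaSeq G a)
    (hmaxr : b = Fintype.card V ∨ ¬ deltaSeq G b < deltaSeq G (b + 1))
    (M X : Finset V)
    (hM : M = (Finset.univ.filter
        (fun j : Fin (Fintype.card V) => a ≤ (j : ℕ) + 1 ∧ (j : ℕ) + 1 ≤ b)).image ord)
    (hX : X = (Finset.univ.filter
        (fun j : Fin (Fintype.card V) => (j : ℕ) + 1 < a)).image ord) :
    G.IsClique (M : Set V) ∧
      ∀ u ∈ M, ((G.neighborFinset u ∩ X).card : ℤ) = deltaSeq G a := by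
  classical
  subst hM hX
  have hopt' : ∀ m : ℕ, m ≤ Fintype.card V → edgesIn G (pref ord m) = maxEdges G m := hopt
  have hXp : (Finset.univ.filter (fun j : Fin (Fintype.card V) => (j : ℕ) + 1 < a)).image ord
      = pref ord (a - 1) := by
    rw [pref]; congr 1; ext j; simp; omega
  rw [hXp]
  have stepA : ∀ i : Fin (Fintype.card V), a ≤ (i : ℕ) + 1 →
      ((G.neighborFinset (ord i) ∩ pref ord (a - 1)).card : ℤ) ≤ deltaSeq G a := by
    intro i hi
    have hnot : ord i ∉ pref ord (a - 1) := by rw [mem_pref]; omega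
    have hins := edgesIn_insert G (pref ord (a - 1)) (ord i) hnot
    have h1 : edgesIn G (pref ord (a - 1)) = maxEdges G (a - 1) := hopt' (a - 1) (by omega)
    have hcard : (insert (ord i) (pref ord (a - 1))).card = a := by
      rw [Finset.card_insert_of_notMem hnot, card_pref _ _ (by omega)]; omega
    have h2 := edgesIn_le_maxEdges G (insert (ord i) (pref ord (a - 1)))
    rw [hcard, hins, h1] at h2
    unfold deltaSeq
    omega
  have stepB : ∀ k : ℕ, a + k ≤ b → deltaSeq G a + k ≤ deltaSeq G (a + k) := by
    intro k
    induction k with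
    | zero => intro _; simp
    | succ k ih =>
      intro hk
      have h1 := ih (by omega)
      have h2 := hmono (a + k) (by omega) (by omega)
      have h3 : a + (k + 1) = (a + k) + 1 := by omega
      rw [h3]
      push_cast
      push_cast at h1
      linarith
  have hdeg : ∀ i : Fin (Fintype.card V),
      ((G.neighborFinset (ord i) ∩ pref ord (i : ℕ)).card : ℤ) = deltaSeq G ((i : ℕ) + 1) := by
    intro i
    have hins := edgesIn_insert G (pref ord (i : ℕ)) (ord i) (by rw [mem_pref]; omega)
    have hps : pref ord ((i : ℕ) + 1) = insert (ord i) (pref ord (i : ℕ)) := by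
      rw [pref_succ ord (i : ℕ) i.isLt, Fin.eta]
    rw [← hps] at hins
    rw [hopt' ((i : ℕ) + 1) i.isLt, hopt' (i : ℕ) (le_of_lt i.isLt)] at hins
    unfold deltaSeq
    simp only [Nat.add_sub_cancel]
    omega
  have hcore : ∀ i : Fin (Fintype.card V), a ≤ (i : ℕ) + 1 → (i : ℕ) + 1 ≤ b →
      ((G.neighborFinset (ord i) ∩ pref ord (a - 1)).card : ℤ) = deltaSeq G a ∧
      (pref ord (i : ℕ) \ pref ord (a - 1)) ⊆ G.neighborFinset (ord i) := by
    intro i h1 h2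
    have hsub : pref ord (a - 1) ⊆ pref ord (i : ℕ) := pref_mono ord (by omega)
    have hsplit : G.neighborFinset (ord i) ∩ pref ord (i : ℕ)
        = (G.neighborFinset (ord i) ∩ pref ord (a - 1))
          ∪ (G.neighborFinset (ord i) ∩ (pref ord (i : ℕ) \ pref ord (a - 1))) := by
      rw [← Finset.inter_union_distrib_left, Finset.union_sdiff_of_subset hsub]
    have hdisj : Disjoint (G.neighborFinset (ord i) ∩ pref ord (a - 1))
        (G.neighborFinset (ord i) ∩ (pref ord (i : ℕ) \ pref ord (a - 1))) :=
      Finset.disjoint_sdiff.mono Finset.inter_subset_right Finset.inter_subset_right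
    have hcardsplit : (G.neighborFinset (ord i) ∩ pref ord (i : ℕ)).card
        = (G.neighborFinset (ord i) ∩ pref ord (a - 1)).card
          + (G.neighborFinset (ord i) ∩ (pref ord (i : ℕ) \ pref ord (a - 1))).card := by
      rw [hsplit, Finset.card_union_of_disjoint hdisj]
    have hScard : (pref ord (i : ℕ) \ pref ord (a - 1)).card = (i : ℕ) - (a - 1) := by
      rw [Finset.card_sdiff_of_subset hsub, card_pref _ _ (le_of_lt i.isLt), card_pref _ _ (by omega)]
    have hsle : (G.neighborFinset (ord i) ∩ (pref ord (i : ℕ) \ pref ord (a - 1))).card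
        ≤ (i : ℕ) - (a - 1) := hScard ▸ Finset.card_le_card Finset.inter_subset_right
    have hA := stepA i h1
    have hB := stepB ((i : ℕ) + 1 - a) (by omega)
    rw [show a + ((i : ℕ) + 1 - a) = (i : ℕ) + 1 from by omega] at hB
    have hD := hdeg i
    have hc : ((G.neighborFinset (ord i) ∩ pref ord (a - 1)).card : ℤ) = deltaSeq G a := by
      omega
    refine ⟨hc, ?_⟩
    have hs : (pref ord (i : ℕ) \ pref ord (a - 1)).card
        ≤ (G.neighborFinset (ord i) ∩ (pref ord (i : ℕ) \ pref ord (a - 1))).card := by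
      omega
    have heq := Finset.eq_of_subset_of_card_le Finset.inter_subset_right hs
    intro w hw
    rw [← heq] at hw
    exact (Finset.mem_inter.mp hw).1
  constructor
  · rw [SimpleGraph.isClique_iff]
    intro u hu w hw hne
    simp only [Finset.mem_coe, Finset.mem_image, Finset.mem_filter, Finset.mem_univ,
      true_and] at hu hw
    obtain ⟨i, ⟨hi1, hi2⟩, rfl⟩ := hu
    obtain ⟨k, ⟨hk1, hk2⟩, rfl⟩ := hw
    have hik : (i : ℕ) ≠ (k : ℕ) := fun h => hne (congrArg ord (Fin.ext h))
    rcases Nat.lt_or_ge (k : ℕ) (i : ℕ) with hlt | hge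
    · have hwmem : ord k ∈ pref ord (i : ℕ) \ pref ord (a - 1) := by
        rw [Finset.mem_sdiff, mem_pref, mem_pref]; omega
      have := (hcore i hi1 hi2).2 hwmem
      rwa [SimpleGraph.mem_neighborFinset] at this
    · have hwmem : ord i ∈ pref ord (k : ℕ) \ pref ord (a - 1) := by
        rw [Finset.mem_sdiff, mem_pref, mem_pref]; omega
      have := (hcore k hk1 hk2).2 hwmem
      rw [SimpleGraph.mem_neighborFinset] at this
      exact this.symm
  · intro u hu
    simp only [Finset.mem_image, Finset.mem_filter, Finset.mem_univ, true_and] at hu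
    obtain ⟨i, ⟨hi1, hi2⟩, rfl⟩ := hu
    exact (hcore i hi1 hi2).1
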